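/- arXiv:1511.02913 — 2 statements merged into one kernel-verified Lean document; each statement's English description precedes it below -/
import Mathlib

section
/- Let G be a strongly connected digraph with start vertex s, and let u be a vertex that is a nontrivial dominator of G_s or equals s. If w is a proper descendant of u in the dominator tree D (w ∈ D̃(u)) with h(w) ∉ D̃(u), then the set H(w) of descendants of w in the loop nesting tree H induces a strongly connected component of G\u. -/
/-!
Every `x ∈ H(w)` is a DFS descendant of `w` lying in `loop(w) ∪ {w}`, so `w` reaches `x` along
the DFS tree and `x` returns to `w` inside the subtree of `w`; as `u` is a proper DFS ancestor
of `w`, neither path meets `u`. For maximality, let `m` be the first vertex in preorder of the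
strongly connected component `C` of `w` in `G \ u`. A path from `m` that leaves the subtree of
`m` must visit a vertex preceding `m`, so `C ⊆ loop(m) ∪ {m} = H(m)`. If `m ≠ w`, then `m` is
an `H`-ancestor of `h(w)`. Since `m` reaches `w` avoiding `u`, `u` is a DFS ancestor of `m`,
hence a proper ancestor of `h(w)`; then the tree path from `h(w)` to `w` avoids `u`, so `u`
dominates `h(w)`, contradicting `h(w) ∉ D̃(u)`.
-/

namespace StrongConn

variable {V : Type*}

/-- `p` is a walk in the digraph `G` from `u` to `v`, recorded as the list of visited vertices. -/
def IsWalk (G : V → V → Prop) (u v : V) (p : List V) : Prop :=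
  p.Chain' G ∧ p.head? = some u ∧ p.getLast? = some v

/-- The directed edge `(a,b)` occurs on the walk `p`. -/
def EdgeOn (a b : V) (p : List V) : Prop := (a, b) ∈ p.zip p.tail

/-- `v` is reachable from `u` in `G`. -/
def Reach (G : V → V → Prop) (u v : V) : Prop := ∃ p, IsWalk G u v p

/-- `u` and `v` are strongly connected in `G`. -/
def SConn (G : V → V → Prop) (u v : V) : Prop := Reach G u v ∧ Reach G v u

def StronglyConnected (G : V → V → Prop) : Prop := ∀ u v, Reach G u v

/-- `G` with the edge `(a,b)` deleted. -/
def DelEdge (G : V → V → Prop) (a b : V) : V → V → Prop :=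
  fun x y => G x y ∧ ¬(x = a ∧ y = b)

/-- `G` with the vertex `u` (and all incident edges) deleted. -/
def DelVertex (G : V → V → Prop) (u : V) : V → V → Prop :=
  fun x y => G x y ∧ x ≠ u ∧ y ≠ u

/-- `C` is a strongly connected component of `G`. -/
def IsSCC (G : V → V → Prop) (C : Set V) : Prop :=
  C.Nonempty ∧ (∀ x ∈ C, ∀ y ∈ C, SConn G x y) ∧ ∀ x ∈ C, ∀ y, SConn G x y → y ∈ C

/-- `(a,b)` is a strong bridge: an edge whose removal increases the number of
strongly connected components, i.e. it separates some strongly connected pair. -/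
def IsStrongBridge (G : V → V → Prop) (a b : V) : Prop :=
  G a b ∧ ∃ x y, SConn G x y ∧ ¬ SConn (DelEdge G a b) x y

/-- `u` is a strong articulation point: removing it increases the number of strongly
connected components, i.e. it separates some strongly connected pair of other vertices. -/
def IsStrongArticulationPoint (G : V → V → Prop) (u : V) : Prop :=
  ∃ x y, x ≠ u ∧ y ≠ u ∧ SConn G x y ∧ ¬ SConn (DelVertex G u) x y

/-- The reverse digraph. -/
def Rev (G : V → V → Prop) : V → V → Prop := fun x y => G y x

/-- `u` dominates `v` in the flow graph `G_s`; equivalently, `u` is an ancestor of `v`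
(and `v` a descendant of `u`) in the dominator tree of `G_s`. -/
def Dom (G : V → V → Prop) (s u v : V) : Prop :=
  ∀ p, IsWalk G s v p → u ∈ p

/-- `u` is the immediate dominator of `v` in `G_s` (the parent of `v` in the dominator tree). -/
def Idom (G : V → V → Prop) (s u v : V) : Prop :=
  u ≠ v ∧ Dom G s u v ∧ ∀ w, w ≠ v → Dom G s w v → Dom G s w u

/-- Edge `(a,b)` is a bridge of the flow graph `G_s`: every walk from `s` to `b` uses it. -/
def IsBridge (G : V → V → Prop) (s a b : V) : Prop :=
  G a b ∧ ∀ p, IsWalk G s b p → EdgeOn a b p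

/-- `r` is the head of some bridge of `G_s`, i.e. a non-`s` root in the bridge
decomposition of the dominator tree. -/
def IsBridgeHead (G : V → V → Prop) (s r : V) : Prop :=
  ∃ a, IsBridge G s a r

/-- `r` is the root of the tree containing `x` in the bridge decomposition of the
dominator tree of `G_s`: `r` dominates `x`, `r` is `s` or a bridge head, and every
bridge head dominating `x` dominates `r`. -/
def IsBDRoot (G : V → V → Prop) (s r x : V) : Prop :=
  Dom G s r x ∧ (r = s ∨ IsBridgeHead G s r) ∧
    ∀ z, Dom G s z x → IsBridgeHead G s z → Dom G s z r

/-- A depth-first search tree of `G` rooted at `s`, given by a parent function and a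
preorder numbering. -/
structure DFSTree (G : V → V → Prop) (s : V) where
  parent : V → V
  pre : V → ℕ
  parent_root : parent s = s
  parent_edge : ∀ v, v ≠ s → G (parent v) v
  root_reach : ∀ v, ∃ n, parent^[n] v = s
  pre_inj : Function.Injective pre
  pre_parent : ∀ v, v ≠ s → pre (parent v) < pre v
  /-- Descendants of a vertex form a contiguous interval in preorder. -/
  interval : ∀ u v w, (∃ n, parent^[n] w = u) → pre u ≤ pre v → pre v ≤ pre w →
      ∃ n, parent^[n] v = u
  /-- The defining property of depth-first search trees: every edge going forward
  in preorder goes to a descendant. -/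
  dfs_edge : ∀ u v, G u v → pre u < pre v → ∃ n, parent^[n] v = u

/-- `u` is an ancestor of `v` in the tree `T` (every vertex is an ancestor of itself). -/
def DFSTree.Anc {G : V → V → Prop} {s : V} (T : DFSTree G s) (u v : V) : Prop :=
  ∃ n, T.parent^[n] v = u

/-- `x ∈ loop(u)` with respect to the tree-ancestor relation `tanc`: `x` is a descendant
of `u` and there is a walk from `x` to `u` using only descendants of `u`. -/
def InLoop (G : V → V → Prop) (tanc : V → V → Prop) (u x : V) : Prop :=
  tanc u x ∧ ∃ p, IsWalk G x u p ∧ ∀ y ∈ p, tanc u y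

/-- `hp` is the parent function of the loop nesting tree of `G_s` with respect to the
DFS-tree ancestor relation `tanc`: `hp x` is the nearest proper ancestor `u` of `x`
in the DFS tree with `x ∈ loop(u)`. -/
def IsLoopParent (G : V → V → Prop) (s : V) (tanc : V → V → Prop) (hp : V → V) : Prop :=
  hp s = s ∧ ∀ x, x ≠ s →
    (tanc (hp x) x ∧ hp x ≠ x ∧ InLoop G tanc (hp x) x ∧
      ∀ u, tanc u x → u ≠ x → InLoop G tanc u x → tanc u (hp x))

/-- `u` is an ancestor of `v` in the loop nesting tree with parent function `hp`. -/
def HAnc (hp : V → V) (u v : V) : Prop := ∃ n, hp^[n] v = u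

/-- `w` is the nearest common ancestor of `x` and `y` in the loop nesting tree
with parent function `hp`. -/
def HNca (hp : V → V) (x y w : V) : Prop :=
  HAnc hp w x ∧ HAnc hp w y ∧ ∀ z, HAnc hp z x → HAnc hp z y → HAnc hp z w

/-- `u` is a nontrivial dominator of `G_s`: `u ≠ s` and `u` is not a leaf of the
dominator tree (it properly dominates some vertex). -/
def NontrivialDom (G : V → V → Prop) (s u : V) : Prop :=
  u ≠ s ∧ ∃ w, w ≠ u ∧ Dom G s u w

/-- `a` and `b` are siblings in the dominator tree of `G_s`. -/
def SiblingInD (G : V → V → Prop) (s a b : V) : Prop :=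
  a ≠ b ∧ ∃ w, Idom G s w a ∧ Idom G s w b

/-- Given the bridge-decomposition root function `r` and loop-nesting parent `hp`,
`z` is a boundary vertex. -/
def Boundary (s : V) (r hp : V → V) (z : V) : Prop := z = s ∨ r (hp z) ≠ r z

/-- `z` is the nearest boundary ancestor of `x` in the loop nesting tree. -/
def IsNearestBoundary (s : V) (r hp : V → V) (x z : V) : Prop :=
  HAnc hp z x ∧ Boundary s r hp z ∧
    ∀ z', HAnc hp z' x → Boundary s r hp z' → HAnc hp z' z

/-- `x` and `y` are 2-edge-connected: no single edge deletion leaves them in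
different strongly connected components. -/
def TwoEdgeConnected (G : V → V → Prop) (x y : V) : Prop :=
  ∀ a b, G a b → SConn (DelEdge G a b) x y

open Relation

def Induce (G : V → V → Prop) (P : V → Prop) : V → V → Prop :=
  fun x y => G x y ∧ P x ∧ P y

section Walks

variable {G : V → V → Prop}

theorem Induce.mono {P Q : V → Prop} (h : ∀ x, P x → Q x) {x y : V} (hxy : Induce G P x y) :
    Induce G Q x y :=
  ⟨hxy.1, h x hxy.2.1, h y hxy.2.2⟩

theorem exists_walk_forall_mem_iff {P : V → Prop} {a b : V} :
    (∃ p, IsWalk G a b p ∧ ∀ y ∈ p, P y) ↔ P a ∧ ReflTransGen (Induce G P) a b := by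
  constructor
  · rintro ⟨p, hp, hP⟩
    induction p generalizing a with
    | nil => simp [IsWalk] at hp
    | cons x rest ih =>
      obtain rfl : x = a := by simpa using hp.2.1
      refine ⟨hP x List.mem_cons_self, ?_⟩
      cases rest with
      | nil =>
        obtain rfl : x = b := by simpa using hp.2.2
        exact .refl
      | cons y t =>
        have hchain := List.isChain_cons_cons.mp hp.1
        have hrest : IsWalk G y b (y :: t) :=
          ⟨hchain.2, rfl, List.getLast?_cons_cons ▸ hp.2.2⟩
        obtain ⟨hy, hyb⟩ := ih hrest fun z hz => hP z (List.mem_cons_of_mem x hz)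
        exact .head ⟨hchain.1, hP x List.mem_cons_self, hy⟩ hyb
  · rintro ⟨ha, h⟩
    induction h using ReflTransGen.head_induction_on with
    | refl => exact ⟨[b], ⟨List.isChain_singleton b, rfl, rfl⟩, by simpa using ha⟩
    | head hac _ ih =>
      obtain ⟨p, ⟨hchain, hhead, hlast⟩, hP⟩ := ih hac.2.2
      cases p with
      | nil => simp at hhead
      | cons c p =>
        obtain rfl : c = _ := by simpa using hhead
        refine ⟨_ :: c :: p, ⟨List.isChain_cons_cons.mpr ⟨hac.1, hchain⟩, rfl, ?_⟩, ?_⟩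
        · rwa [List.getLast?_cons_cons]
        · simpa [ha] using hP

theorem reach_iff_reflTransGen {a b : V} : Reach G a b ↔ ReflTransGen G a b := by
  have h := exists_walk_forall_mem_iff (G := G) (P := fun _ => True) (a := a) (b := b)
  simp only [implies_true, and_true, true_and] at h
  exact h.trans ⟨ReflTransGen.mono (fun _ _ hxy => hxy.1) _ _,
    ReflTransGen.mono (fun _ _ hxy => ⟨hxy, trivial, trivial⟩) _ _⟩

theorem sConn_iff_reflTransGen {a b : V} :
    SConn G a b ↔ ReflTransGen G a b ∧ ReflTransGen G b a :=
  and_congr reach_iff_reflTransGen reach_iff_reflTransGen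

theorem not_dom_iff {s u v : V} :
    ¬ Dom G s u v ↔ s ≠ u ∧ ReflTransGen (DelVertex G u) s v := by
  simp only [Dom, not_forall, exists_prop]
  refine Iff.trans ?_ (exists_walk_forall_mem_iff (P := (· ≠ u)))
  exact exists_congr fun p => and_congr_right fun _ => ⟨fun h y hy hyu => h (hyu ▸ hy),
    fun h hu => h u hu rfl⟩

theorem inLoop_iff {tanc : V → V → Prop} {u x : V} :
    InLoop G tanc u x ↔ tanc u x ∧ ReflTransGen (Induce G (tanc u)) x u :=
  and_congr_right fun hx => exists_walk_forall_mem_iff.trans (and_iff_right hx)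

theorem reflTransGen_delVertex_of_induce {P : V → Prop} {u a b : V} (hP : ∀ z, P z → z ≠ u)
    (h : ReflTransGen (Induce G P) a b) : ReflTransGen (DelVertex G u) a b :=
  ReflTransGen.mono (fun _ _ hxy => Induce.mono (Q := (· ≠ u)) hP hxy) _ _ h

theorem ne_of_reflTransGen_delVertex {u a b : V} (h : ReflTransGen (DelVertex G u) a b)
    (hb : b ≠ u) : a ≠ u := by
  rcases h.cases_head with rfl | ⟨c, hac, _⟩
  · exact hb
  · exact hac.2.1

theorem reflTransGen_induce_component {w x y : V} (hx : ReflTransGen G w x ∧ ReflTransGen G x w)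
    (hy : ReflTransGen G w y ∧ ReflTransGen G y w) :
    ReflTransGen (Induce G fun z => ReflTransGen G w z ∧ ReflTransGen G z w) x y := by
  have hxy : ReflTransGen G x y := hx.2.trans hy.1
  induction hxy using ReflTransGen.head_induction_on with
  | refl => exact .refl
  | @head a c hac hcy ih =>
    have hc : ReflTransGen G w c ∧ ReflTransGen G c w := ⟨hx.1.tail hac, hcy.trans hy.2⟩
    exact .head ⟨hac, hx, hc⟩ (ih hc)

end Walks

namespace DFSTree

variable {G : V → V → Prop} {s : V} (T : DFSTree G s) {hp : V → V}

theorem anc_refl (a : V) : T.Anc a a := ⟨0, rfl⟩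

theorem anc_trans {a b c : V} (hab : T.Anc a b) (hbc : T.Anc b c) : T.Anc a c := by
  obtain ⟨n, hn⟩ := hab
  obtain ⟨m, hm⟩ := hbc
  exact ⟨n + m, by rw [Function.iterate_add_apply, hm, hn]⟩

theorem anc_parent (b : V) : T.Anc (T.parent b) b := ⟨1, rfl⟩

theorem root_anc (a : V) : T.Anc s a := T.root_reach a

theorem eq_root_of_anc_root {a : V} (h : T.Anc a s) : a = s := by
  obtain ⟨n, hn⟩ := h
  rw [← hn, Function.iterate_fixed T.parent_root]

theorem pre_le_of_anc {a b : V} (h : T.Anc a b) : T.pre a ≤ T.pre b := by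
  obtain ⟨n, rfl⟩ := h
  induction n generalizing b with
  | zero => rfl
  | succ n ih =>
    rw [Function.iterate_succ_apply]
    by_cases hb : b = s
    · rw [hb, T.parent_root, Function.iterate_fixed T.parent_root]
    · exact ih.trans (T.pre_parent b hb).le

theorem anc_antisymm {a b : V} (hab : T.Anc a b) (hba : T.Anc b a) : a = b :=
  T.pre_inj ((T.pre_le_of_anc hab).antisymm (T.pre_le_of_anc hba))

theorem pre_lt_of_anc_of_ne {a b : V} (h : T.Anc a b) (hne : a ≠ b) : T.pre a < T.pre b :=
  (T.pre_le_of_anc h).lt_of_ne fun he => hne (T.pre_inj he)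

theorem reflTransGen_of_anc {a b : V} (h : T.Anc a b) :
    ReflTransGen (Induce G fun z => T.Anc a z ∧ T.Anc z b) a b := by
  obtain ⟨n, rfl⟩ := h
  induction n generalizing b with
  | zero => exact .refl
  | succ n ih =>
    rw [Function.iterate_succ_apply]
    by_cases hb : b = s
    · subst hb
      rw [T.parent_root, Function.iterate_fixed T.parent_root]
    · refine .tail (ReflTransGen.mono (fun x y hxy => ?_) _ _ ih)
        ⟨T.parent_edge b hb, ⟨⟨n, rfl⟩, T.anc_parent b⟩, ⟨n + 1, rfl⟩, T.anc_refl b⟩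
      exact hxy.mono fun z hz => ⟨hz.1, T.anc_trans hz.2 (T.anc_parent b)⟩

theorem anc_of_reflTransGen_of_pre_le {P : V → Prop} {m a z : V}
    (hmin : ∀ t, P t → T.pre m ≤ T.pre t) (h : ReflTransGen (Induce G P) a z)
    (ha : T.Anc m a) : T.Anc m z := by
  induction h with
  | refl => exact ha
  | @tail b c _ hbc ih =>
    rcases lt_or_ge (T.pre b) (T.pre c) with hlt | hge
    · exact T.anc_trans ih (T.dfs_edge b c hbc.1 hlt)
    · exact T.interval m c b ih (hmin c hbc.2.2) hge

theorem anc_of_dom_of_reflTransGen {u w m : V} (hdom : Dom G s u w)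
    (h : ReflTransGen (DelVertex G u) m w) : T.Anc u m := by
  by_contra hum
  have hsu : s ≠ u := fun hsu => hum (hsu ▸ T.root_anc m)
  have hsm : ReflTransGen (DelVertex G u) s m :=
    reflTransGen_delVertex_of_induce (fun _ hz hzu => hum (hzu ▸ hz.2))
      (T.reflTransGen_of_anc (T.root_anc m))
  exact not_dom_iff.2 ⟨hsu, hsm.trans h⟩ hdom

theorem anc_of_dom {u w : V} (hdom : Dom G s u w) : T.Anc u w :=
  T.anc_of_dom_of_reflTransGen hdom .refl

theorem dom_of_dom_of_anc {u v w : V} (hdom : Dom G s u w) (hvw : T.Anc v w)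
    (hvu : ¬ T.Anc v u) : Dom G s u v := by
  by_contra hnd
  obtain ⟨hsu, hsv⟩ := not_dom_iff.1 hnd
  have hvw' : ReflTransGen (DelVertex G u) v w :=
    reflTransGen_delVertex_of_induce (fun _ hz hzu => hvu (hzu ▸ hz.1))
      (T.reflTransGen_of_anc hvw)
  exact not_dom_iff.2 ⟨hsu, hsv.trans hvw'⟩ hdom

theorem anc_loopParent (hlp : IsLoopParent G s T.Anc hp) (x : V) : T.Anc (hp x) x := by
  by_cases hx : x = s
  · subst hx
    rw [hlp.1]
    exact T.anc_refl x
  · exact (hlp.2 x hx).1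

theorem reflTransGen_loopParent (hlp : IsLoopParent G s T.Anc hp) (x : V) :
    ReflTransGen (Induce G (T.Anc (hp x))) x (hp x) := by
  by_cases hx : x = s
  · subst hx
    rw [hlp.1]
  · exact (inLoop_iff.1 (hlp.2 x hx).2.2.1).2

theorem anc_of_hAnc (hlp : IsLoopParent G s T.Anc hp) {w x : V} (h : HAnc hp w x) :
    T.Anc w x := by
  obtain ⟨n, rfl⟩ := h
  induction n generalizing x with
  | zero => exact T.anc_refl x
  | succ n ih => exact T.anc_trans ih (T.anc_loopParent hlp x)

theorem reflTransGen_of_hAnc (hlp : IsLoopParent G s T.Anc hp) {w x : V} (h : HAnc hp w x) :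
    ReflTransGen (Induce G (T.Anc w)) x w := by
  obtain ⟨n, rfl⟩ := h
  induction n generalizing x with
  | zero => exact .refl
  | succ n ih =>
    have hw : T.Anc (hp^[n] (hp x)) (hp x) := T.anc_of_hAnc hlp ⟨n, rfl⟩
    exact (ReflTransGen.mono (fun _ _ hab => Induce.mono (fun z => T.anc_trans hw) hab) _ _
      (T.reflTransGen_loopParent hlp x)).trans ih

theorem hAnc_of_reflTransGen (hlp : IsLoopParent G s T.Anc hp) {w x : V} (hwx : T.Anc w x)
    (hxw : ReflTransGen (Induce G (T.Anc w)) x w) : HAnc hp w x := by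
  induction hN : T.pre x using Nat.strong_induction_on generalizing x with
  | _ N ih =>
    by_cases hxw_eq : x = w
    · exact ⟨0, hxw_eq⟩
    have hxs : x ≠ s := fun hxs => hxw_eq (hxs ▸ (T.eq_root_of_anc_root (hxs ▸ hwx)).symm)
    obtain ⟨hpx, hpx_ne, -, hpx_max⟩ := hlp.2 x hxs
    have hwpx : T.Anc w (hp x) := hpx_max w hwx (Ne.symm hxw_eq) (inLoop_iff.2 ⟨hwx, hxw⟩)
    have hpxw : ReflTransGen (Induce G (T.Anc w)) (hp x) w :=
      (ReflTransGen.mono (fun _ _ hab => Induce.mono (fun z hz => T.anc_trans hwpx hz.1) hab) _ _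
        (T.reflTransGen_of_anc hpx)).trans hxw
    obtain ⟨n, hn⟩ := ih _ (hN ▸ T.pre_lt_of_anc_of_ne hpx hpx_ne) hwpx hpxw rfl
    exact ⟨n + 1, hn⟩

theorem hAnc_of_forall_pre_le (hlp : IsLoopParent G s T.Anc hp) {P : V → Prop} {m t : V}
    (hP : ∀ x y, P x → P y → ReflTransGen (Induce G P) x y) (hm : P m)
    (hmin : ∀ t, P t → T.pre m ≤ T.pre t) (ht : P t) : HAnc hp m t := by
  have hdesc : ∀ z, P z → T.Anc m z := fun z hz =>
    T.anc_of_reflTransGen_of_pre_le hmin (hP m z hm hz) (T.anc_refl m)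
  exact T.hAnc_of_reflTransGen hlp (hdesc t ht)
    (ReflTransGen.mono (fun _ _ hab => hab.mono hdesc) _ _ (hP t m ht hm))

theorem exists_hAnc_of_mem_component (hlp : IsLoopParent G s T.Anc hp) {D : V → V → Prop}
    (hD : ∀ a b, D a b → G a b) (w : V) :
    ∃ m, (ReflTransGen D w m ∧ ReflTransGen D m w) ∧
      ∀ t, ReflTransGen D w t → ReflTransGen D t w → HAnc hp m t := by
  obtain ⟨m, hm, hmin⟩ := (InvImage.wf T.pre wellFounded_lt).has_min
    {t | ReflTransGen D w t ∧ ReflTransGen D t w} ⟨w, .refl, .refl⟩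
  refine ⟨m, hm, fun t hwt htw => T.hAnc_of_forall_pre_le hlp (fun a b ha hb => ?_) hm
    (fun t ht => not_lt.1 (hmin t ht)) ⟨hwt, htw⟩⟩
  exact ReflTransGen.mono (fun _ _ h => ⟨hD _ _ h.1, h.2⟩) _ _
    (reflTransGen_induce_component ha hb)

theorem reflTransGen_delVertex_of_hAnc (hlp : IsLoopParent G s T.Anc hp) {u w x : V}
    (hwu : ¬ T.Anc w u) (hx : HAnc hp w x) :
    ReflTransGen (DelVertex G u) w x ∧ ReflTransGen (DelVertex G u) x w :=
  ⟨reflTransGen_delVertex_of_induce (fun _ hz hzu => hwu (hzu ▸ hz.1))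
    (T.reflTransGen_of_anc (T.anc_of_hAnc hlp hx)),
   reflTransGen_delVertex_of_induce (fun _ hz hzu => hwu (hzu ▸ hz))
    (T.reflTransGen_of_hAnc hlp hx)⟩

end DFSTree

theorem stmt14_general (G : V → V → Prop) (s u : V)
    (T : DFSTree G s) (hp : V → V) (hlp : IsLoopParent G s T.Anc hp)
    (w : V) (hw : Dom G s u w ∧ w ≠ u)
    (hw2 : ¬ (Dom G s u (hp w) ∧ hp w ≠ u)) :
    IsSCC (DelVertex G u) {x | HAnc hp w x} := by
  obtain ⟨hdom, hwu⟩ := hw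
  have hwu' : ¬ T.Anc w u := fun h => hwu (T.anc_antisymm h (T.anc_of_dom hdom))
  have hconn := fun x (hx : HAnc hp w x) => T.reflTransGen_delVertex_of_hAnc hlp hwu' hx
  refine ⟨⟨w, 0, rfl⟩, fun x hx y hy => sConn_iff_reflTransGen.2
    ⟨(hconn x hx).2.trans (hconn y hy).1, (hconn y hy).2.trans (hconn x hx).1⟩,
    fun x hx y hxy => ?_⟩
  obtain ⟨hxy, hyx⟩ := sConn_iff_reflTransGen.1 hxy
  obtain ⟨m, ⟨-, hmw⟩, hH⟩ :=
    T.exists_hAnc_of_mem_component hlp (D := DelVertex G u) (fun _ _ h => h.1) w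
  obtain ⟨_ | n, hn⟩ := hH w .refl .refl
  · obtain rfl : w = m := hn
    exact hH y ((hconn x hx).1.trans hxy) (hyx.trans (hconn x hx).2)
  have hum : T.Anc u m := T.anc_of_dom_of_reflTransGen hdom hmw
  have hmu : m ≠ u := ne_of_reflTransGen_delVertex hmw hwu
  have hmpw : T.Anc m (hp w) := T.anc_of_hAnc hlp ⟨n, hn⟩
  have hpwu : ¬ T.Anc (hp w) u := fun h => hmu (T.anc_antisymm (T.anc_trans hmpw h) hum)
  exact absurd ⟨T.dom_of_dom_of_anc hdom (T.anc_loopParent hlp w) hpwu,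
    fun h => hpwu (h ▸ T.anc_refl u)⟩ hw2

/-- If `u` is a nontrivial dominator of `G_s` or `u = s`, and `w` is a proper
descendant of `u` in `D` with `h(w) ∉ D̃(u)`, then `H(w)` induces a strongly
connected component of `G \ u`. -/
theorem stmt14 (G : V → V → Prop) (hG : StronglyConnected G) (s u : V)
    (hu : NontrivialDom G s u ∨ u = s)
    (T : DFSTree G s) (hp : V → V) (hlp : IsLoopParent G s T.Anc hp)
    (w : V) (hw : Dom G s u w ∧ w ≠ u)
    (hw2 : ¬ (Dom G s u (hp w) ∧ hp w ≠ u)) :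
    IsSCC (DelVertex G u) {x | HAnc hp w x} :=
  stmt14_general G s u T hp hlp w hw hw2

end StrongConn
end

section
/- Let G be a strongly connected digraph with start vertex s, and let u be a strong articulation point that is a nontrivial dominator of G_s but not of G_s^R. Then the subgraph of G\u induced by V \ D(u) is a strongly connected component of G\u. -/
/-!
Writing `G \ u` for `DelVertex G u`: for `u ≠ s`, a vertex lies outside `D(u)` exactly when it is
reachable from `s` in `G \ u`. Since `u` dominates no vertex in `G_s^R`, every vertex other
than `u` reaches `s` in `G \ u`. So the vertices outside `D(u)` all reach and are reached
from `s` in `G \ u`, and the set of vertices reachable from `s` is closed under reachability.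
-/

namespace StrongConn

variable {V : Type*}

section Walks

variable {G H : V → V → Prop} {u x y z : V} {p : List V}

lemma isWalk_iff : IsWalk G x y p ↔ p.IsChain G ∧ p.head? = some x ∧ p.getLast? = some y :=
  Iff.rfl

lemma isWalk_singleton (G : V → V → Prop) (x : V) : IsWalk G x x [x] :=
  ⟨List.isChain_singleton x, rfl, rfl⟩

lemma isWalk_cons_cons_iff :
    IsWalk G x z (x :: y :: p) ↔ G x y ∧ IsWalk G y z (y :: p) := by
  simp [isWalk_iff, List.isChain_cons_cons, and_assoc]

lemma IsWalk.cons (hxy : G x y) (h : IsWalk G y z p) : IsWalk G x z (x :: p) := by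
  obtain _ | ⟨y', p⟩ := p
  · simp [isWalk_iff] at h
  · obtain rfl : y' = y := by simpa using h.2.1
    exact isWalk_cons_cons_iff.2 ⟨hxy, h⟩

lemma IsWalk.reflTransGen (h : IsWalk G x y p) : Relation.ReflTransGen G x y := by
  induction p generalizing x with
  | nil => simp [isWalk_iff] at h
  | cons a t ih =>
    obtain rfl : a = x := by simpa using h.2.1
    obtain _ | ⟨b, t⟩ := t
    · obtain rfl : a = y := by simpa using h.2.2
      exact .refl
    · obtain ⟨hab, h⟩ := isWalk_cons_cons_iff.1 h
      exact .head hab (ih h)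

lemma reach_iff_reflTransGen_s15 : Reach G x y ↔ Relation.ReflTransGen G x y := by
  refine ⟨fun ⟨_, h⟩ => h.reflTransGen, fun h => ?_⟩
  induction h using Relation.ReflTransGen.head_induction_on with
  | refl => exact ⟨_, isWalk_singleton G y⟩
  | head hxy _ ih =>
    obtain ⟨p, hp⟩ := ih
    exact ⟨_, hp.cons hxy⟩

lemma Reach.trans (hxy : Reach G x y) (hyz : Reach G y z) : Reach G x z :=
  reach_iff_reflTransGen_s15.2 <|
    (reach_iff_reflTransGen_s15.1 hxy).trans (reach_iff_reflTransGen_s15.1 hyz)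

lemma reach_rev_iff : Reach (Rev G) x y ↔ Reach G y x := by
  simp only [reach_iff_reflTransGen_s15]
  exact Relation.reflTransGen_swap

lemma Reach.mono (hGH : G ≤ H) (h : Reach G x y) : Reach H x y :=
  reach_iff_reflTransGen_s15.2 <| Relation.ReflTransGen.mono hGH _ _ (reach_iff_reflTransGen_s15.1 h)

lemma isWalk_delVertex_iff (hx : x ≠ u) :
    IsWalk (DelVertex G u) x y p ↔ IsWalk G x y p ∧ u ∉ p := by
  induction p generalizing x with
  | nil => simp [isWalk_iff]
  | cons a t ih =>
    by_cases hax : a = x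
    case neg => simp [isWalk_iff, hax]
    subst hax
    obtain _ | ⟨b, t⟩ := t
    · simp [isWalk_iff, Ne.symm hx]
    · by_cases hb : b = u
      · subst hb
        simp [isWalk_cons_cons_iff, DelVertex]
      · simp only [isWalk_cons_cons_iff, ih hb, DelVertex, List.mem_cons, not_or]
        tauto

end Walks

section Dominators

variable {G : V → V → Prop} {s u w : V}

lemma not_dom_iff_reach_delVertex (hus : u ≠ s) :
    ¬ Dom G s u w ↔ Reach (DelVertex G u) s w := by
  simp [Dom, Reach, isWalk_delVertex_iff hus.symm]

lemma Reach.ne_of_delVertex (hs : s ≠ u) (h : Reach (DelVertex G u) s w) : w ≠ u := by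
  rcases (reach_iff_reflTransGen_s15.1 h).cases_tail with rfl | ⟨_, _, _, _, hwu⟩
  exacts [hs, hwu]

lemma reach_delVertex_of_not_nontrivialDom_rev (hus : u ≠ s)
    (hndR : ¬ NontrivialDom (Rev G) s u) (hw : w ≠ u) : Reach (DelVertex G u) w s := by
  have : Reach (DelVertex (Rev G) u) s w :=
    (not_dom_iff_reach_delVertex hus).1 fun hd => hndR ⟨hus, w, hw, hd⟩
  exact reach_rev_iff.1 <| this.mono fun a b ⟨hab, ha, hb⟩ => ⟨hab, hb, ha⟩

end Dominators

lemma isSCC_setOf_reach {H : V → V → Prop} {s : V}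
    (hback : ∀ w, Reach H s w → Reach H w s) : IsSCC H {w | Reach H s w} := by
  refine ⟨⟨s, reach_iff_reflTransGen_s15.2 .refl⟩, fun x hx y hy => ?_, fun x hx y hxy => ?_⟩
  · exact ⟨(hback x hx).trans hy, (hback y hy).trans hx⟩
  · exact hx.trans hxy.1

theorem stmt15_general (G : V → V → Prop) (s u : V)
    (hnd : NontrivialDom G s u) (hndR : ¬ NontrivialDom (Rev G) s u) :
    IsSCC (DelVertex G u) {w | ¬ Dom G s u w} := by
  have hus : u ≠ s := hnd.1
  simp_rw [not_dom_iff_reach_delVertex hus]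
  exact isSCC_setOf_reach fun w hw =>
    reach_delVertex_of_not_nontrivialDom_rev hus hndR (hw.ne_of_delVertex hus.symm)

/-- If `u` is a strong articulation point that is a nontrivial dominator of `G_s` but
not of `G_s^R`, then `V \ D(u)` is a strongly connected component of `G \ u`. -/
theorem stmt15 (G : V → V → Prop) (hG : StronglyConnected G) (s u : V)
    (hsap : IsStrongArticulationPoint G u)
    (hnd : NontrivialDom G s u) (hndR : ¬ NontrivialDom (Rev G) s u) :
    IsSCC (DelVertex G u) {w | ¬ Dom G s u w} :=
  stmt15_general G s u hnd hndR

end StrongConn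
end
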